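/- Let K(u) = ∫₀¹ dt/√((1−t²)(1−u·t²)) for u ∈ [0,1) denote the complete elliptic integral of the first kind. Then lim_{k→1⁻} [log((1−k)²/(1+k)²)] / [2K(k²)/K(1−k²)] = −π. -/

import Mathlib

open MeasureTheory Filter Topology

noncomputable section

open intervalIntegral Set

/-- The complete elliptic integral of the first kind,
`K(u) = ∫₀¹ dt / √((1 − t²)(1 − u t²))`. -/
def ellipticK (u : ℝ) : ℝ :=
  ∫ t in (0 : ℝ)..1, 1 / Real.sqrt ((1 - t ^ 2) * (1 - u * t ^ 2))

lemma invsqrt_integrable : IntervalIntegrable (fun t : ℝ => 1 / Real.sqrt (1 - t)) volume 0 1 := by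
  have h : IntervalIntegrable (fun t : ℝ => t ^ (-(1:ℝ)/2)) volume 0 1 :=
    intervalIntegral.intervalIntegrable_rpow' (by norm_num)
  have h2 := (h.comp_sub_left 1).symm
  norm_num at h2
  rw [intervalIntegrable_iff] at h2 ⊢
  refine h2.congr_fun (fun t ht => ?_) measurableSet_uIoc
  rw [Set.uIoc_of_le (by norm_num : (0:ℝ) ≤ 1)] at ht
  have h1t : (0:ℝ) ≤ 1 - t := by linarith [ht.2]
  beta_reduce
  rw [Real.rpow_neg h1t, Real.sqrt_eq_rpow, one_div]
  norm_num

lemma integrable_aux {g : ℝ → ℝ} (hm : Measurable g) (C : ℝ)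
    (hb : ∀ t ∈ Set.Ioc (0:ℝ) 1, |g t| ≤ C * (1 / Real.sqrt (1 - t))) :
    IntervalIntegrable g volume 0 1 := by
  apply (invsqrt_integrable.const_mul C).mono_fun hm.aestronglyMeasurable.restrict
  rw [Filter.EventuallyLE, ae_restrict_iff' measurableSet_uIoc]
  filter_upwards with t ht
  rw [Set.uIoc_of_le (by norm_num : (0:ℝ) ≤ 1)] at ht
  have := hb t ht
  have h0 : 0 ≤ 1 / Real.sqrt (1 - t) := by positivity
  simp only [Real.norm_eq_abs]
  calc |g t| ≤ C * (1 / Real.sqrt (1 - t)) := this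
    _ ≤ |C * (1 / Real.sqrt (1 - t))| := le_abs_self _

lemma meas_f (u : ℝ) : Measurable (fun t : ℝ => 1 / Real.sqrt ((1 - t ^ 2) * (1 - u * t ^ 2))) := by
  simp only [one_div]
  exact (Real.continuous_sqrt.comp (by continuity)).measurable.inv

lemma integrable_ell {u : ℝ} (hu : u ∈ Set.Ico (0:ℝ) 1) :
    IntervalIntegrable (fun t : ℝ => 1 / Real.sqrt ((1 - t ^ 2) * (1 - u * t ^ 2))) volume 0 1 := by
  apply integrable_aux (meas_f u) (1 / Real.sqrt (1 - u))
  intro t ht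
  obtain ⟨ht0, ht1⟩ := ht
  have hs : Real.sqrt (1 - t) * Real.sqrt (1 - u) ≤ Real.sqrt ((1 - t ^ 2) * (1 - u * t ^ 2)) := by
    rw [← Real.sqrt_mul (by linarith)]
    apply Real.sqrt_le_sqrt
    have h1 : 1 - t ≤ 1 - t ^ 2 := by nlinarith
    have h2 : 1 - u ≤ 1 - u * t ^ 2 := by nlinarith [hu.1, hu.2]
    nlinarith [hu.2]
  rw [abs_of_nonneg (by positivity)]
  rcases eq_or_lt_of_le ht1 with h | h
  · rw [h]; norm_num
  · have hpos : 0 < Real.sqrt (1 - t) * Real.sqrt (1 - u) := by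
      have : (0:ℝ) < 1 - t := by linarith
      have : (0:ℝ) < 1 - u := by linarith [hu.2]
      positivity
    calc 1 / Real.sqrt ((1 - t ^ 2) * (1 - u * t ^ 2))
        ≤ 1 / (Real.sqrt (1 - t) * Real.sqrt (1 - u)) := one_div_le_one_div_of_le hpos hs
      _ = 1 / Real.sqrt (1 - u) * (1 / Real.sqrt (1 - t)) := by ring

lemma meas_p (k : ℝ) : Measurable (fun t : ℝ => 1 / Real.sqrt ((1 - t) * (1 - k * t))) := by
  simp only [one_div]
  exact (Real.continuous_sqrt.comp (by continuity)).measurable.inv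

lemma integrable_p {k : ℝ} (hk : k ∈ Set.Ioo (0:ℝ) 1) :
    IntervalIntegrable (fun t : ℝ => 1 / Real.sqrt ((1 - t) * (1 - k * t))) volume 0 1 := by
  apply integrable_aux (meas_p k) (1 / Real.sqrt (1 - k))
  intro t ht
  obtain ⟨ht0, ht1⟩ := ht
  have hs : Real.sqrt (1 - t) * Real.sqrt (1 - k) ≤ Real.sqrt ((1 - t) * (1 - k * t)) := by
    rw [← Real.sqrt_mul (by linarith)]
    apply Real.sqrt_le_sqrt
    nlinarith [mul_nonneg hk.1.le (sq_nonneg (1 - t))]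
  rw [abs_of_nonneg (by positivity)]
  rcases eq_or_lt_of_le ht1 with h | h
  · rw [h]; norm_num
  · have hpos : 0 < Real.sqrt (1 - t) * Real.sqrt (1 - k) := by
      have : (0:ℝ) < 1 - t := by linarith
      have : (0:ℝ) < 1 - k := by linarith [hk.2]
      positivity
    calc 1 / Real.sqrt ((1 - t) * (1 - k * t))
        ≤ 1 / (Real.sqrt (1 - t) * Real.sqrt (1 - k)) := one_div_le_one_div_of_le hpos hs
      _ = 1 / Real.sqrt (1 - k) * (1 / Real.sqrt (1 - t)) := by ring

lemma P_val {k : ℝ} (hk : k ∈ Set.Ioo (0:ℝ) 1) :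
    ∫ t in (0:ℝ)..1, 1 / Real.sqrt ((1 - t) * (1 - k * t)) =
      (2 / Real.sqrt k) * Real.log (1 + Real.sqrt k) - (1 / Real.sqrt k) * Real.log (1 - k) := by
  obtain ⟨hk0, hk1⟩ := hk
  set s := Real.sqrt k with hs
  have hs0 : 0 < s := Real.sqrt_pos.2 hk0
  have hs2 : s ^ 2 = k := Real.sq_sqrt hk0.le
  set F : ℝ → ℝ := fun t => -(2 / s) * Real.log (s * Real.sqrt (1 - t) + Real.sqrt (1 - k * t))
    with hF
  have hgpos : ∀ t ∈ Set.Icc (0:ℝ) 1, 0 < s * Real.sqrt (1 - t) + Real.sqrt (1 - k * t) := by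
    intro t ht
    have h1 : 0 < 1 - k * t := by nlinarith [ht.1, ht.2]
    have := Real.sqrt_pos.2 h1
    have : 0 ≤ s * Real.sqrt (1 - t) := by positivity
    linarith [Real.sqrt_pos.2 h1]
  have hcont : ContinuousOn F (Set.Icc 0 1) := by
    apply ContinuousOn.mul continuousOn_const
    apply ContinuousOn.log
    · exact ((continuous_const.mul ((Real.continuous_sqrt).comp (by continuity))).add
        ((Real.continuous_sqrt).comp (by continuity))).continuousOn
    · intro t ht; exact (hgpos t ht).ne'
  have hderiv : ∀ x ∈ Set.Ioo (0:ℝ) 1,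
      HasDerivAt F (1 / Real.sqrt ((1 - x) * (1 - k * x))) x := by
    intro x hx
    obtain ⟨hx0, hx1⟩ := hx
    have ha0 : 0 < 1 - x := by linarith
    have hb0 : 0 < 1 - k * x := by nlinarith
    set a := Real.sqrt (1 - x) with hadef
    set b := Real.sqrt (1 - k * x) with hbdef
    have hap : 0 < a := Real.sqrt_pos.2 ha0
    have hbp : 0 < b := Real.sqrt_pos.2 hb0
    have ha2 : a ^ 2 = 1 - x := Real.sq_sqrt ha0.le
    have hb2 : b ^ 2 = 1 - k * x := Real.sq_sqrt hb0.le
    have hda : HasDerivAt (fun t : ℝ => Real.sqrt (1 - t)) (-(1 / (2 * a))) x := by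
      have h1 : HasDerivAt (fun t : ℝ => 1 - t) (-1) x := by
        simpa using (hasDerivAt_id x).const_sub 1
      have h2 := (Real.hasDerivAt_sqrt ha0.ne').comp x h1
      exact h2.congr_deriv (by rw [hadef]; ring)
    have hdb : HasDerivAt (fun t : ℝ => Real.sqrt (1 - k * t)) (-(k / (2 * b))) x := by
      have h1 : HasDerivAt (fun t : ℝ => 1 - k * t) (-k) x := by
        simpa using ((hasDerivAt_id x).const_mul k).const_sub 1
      have h2 := (Real.hasDerivAt_sqrt hb0.ne').comp x h1
      exact h2.congr_deriv (by rw [hbdef]; ring)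
    have hg : HasDerivAt (fun t : ℝ => s * Real.sqrt (1 - t) + Real.sqrt (1 - k * t))
        (s * (-(1 / (2 * a))) + (-(k / (2 * b)))) x := (hda.const_mul s).add hdb
    have hgx : s * a + b ≠ 0 := by positivity
    have hlog := (Real.hasDerivAt_log hgx).comp x hg
    have hFd := hlog.const_mul (-(2 / s))
    have heq : -(2 / s) * ((s * a + b)⁻¹ * (s * (-(1 / (2 * a))) + -(k / (2 * b)))) =
        1 / Real.sqrt ((1 - x) * (1 - k * x)) := by
      have hab : Real.sqrt ((1 - x) * (1 - k * x)) = a * b := by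
        rw [hadef, hbdef, ← Real.sqrt_mul ha0.le]
      rw [hab, ← hs2]
      field_simp
      ring
    rw [heq] at hFd
    exact hFd
  have key := intervalIntegral.integral_eq_sub_of_hasDeriv_right_of_le (by norm_num)
    hcont (fun x hx => (hderiv x hx).hasDerivWithinAt) (integrable_p ⟨hk0, hk1⟩)
  rw [key, hF]
  simp only [mul_zero, mul_one, Real.sqrt_one, sub_self, Real.sqrt_zero, zero_add]
  rw [Real.log_sqrt (by linarith : (0:ℝ) ≤ 1 - k)]
  field_simp
  ring

lemma ellipticK_zero : ellipticK 0 = Real.pi / 2 := by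
  rw [ellipticK]
  have key := intervalIntegral.integral_eq_sub_of_hasDeriv_right_of_le (by norm_num : (0:ℝ) ≤ 1)
    (Real.continuous_arcsin.continuousOn)
    (fun x hx => ((Real.hasDerivAt_arcsin (by linarith [hx.1] : x ≠ -1)
      (ne_of_lt hx.2)).hasDerivWithinAt))
    (f' := fun t => 1 / Real.sqrt (1 - t ^ 2)) ?_
  · rw [show (fun t : ℝ => 1 / Real.sqrt ((1 - t ^ 2) * (1 - 0 * t ^ 2)))
      = fun t : ℝ => 1 / Real.sqrt (1 - t ^ 2) by funext t; norm_num]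
    rw [key, Real.arcsin_one, Real.arcsin_zero, sub_zero]
  · have h := integrable_ell (u := 0) (by norm_num)
    rw [show (fun t : ℝ => 1 / Real.sqrt ((1 - t ^ 2) * (1 - 0 * t ^ 2)))
      = fun t : ℝ => 1 / Real.sqrt (1 - t ^ 2) by funext t; norm_num] at h
    exact h

lemma ellipticK_lb {w : ℝ} (hw : w ∈ Set.Ico (0:ℝ) 1) : Real.pi / 2 ≤ ellipticK w := by
  rw [← ellipticK_zero, ellipticK, ellipticK]
  apply intervalIntegral.integral_mono_on (by norm_num) (integrable_ell (by norm_num))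
    (integrable_ell hw)
  intro t ht
  rcases eq_or_lt_of_le ht.2 with h | h
  · rw [h]; norm_num
  · have h1 : 0 < 1 - t ^ 2 := by nlinarith [ht.1]
    have ht2 : t ^ 2 ≤ 1 := by nlinarith [ht.1]
    have h2 : 0 < 1 - w * t ^ 2 := by
      nlinarith [mul_le_mul_of_nonneg_left ht2 hw.1, hw.2]
    have hB : 0 < (1 - t ^ 2) * (1 - w * t ^ 2) := mul_pos h1 h2
    apply one_div_le_one_div_of_le (Real.sqrt_pos.2 hB)
    apply Real.sqrt_le_sqrt
    nlinarith [mul_nonneg (mul_nonneg hw.1 (sq_nonneg t)) h1.le]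

lemma ellipticK_ub {w : ℝ} (hw : w ∈ Set.Ico (0:ℝ) 1) :
    ellipticK w ≤ (1 / Real.sqrt (1 - w)) * (Real.pi / 2) := by
  have h0 : ellipticK w ≤ (1 / Real.sqrt (1 - w)) * ellipticK 0 := by
    rw [ellipticK, ellipticK, ← intervalIntegral.integral_const_mul]
    apply intervalIntegral.integral_mono_on (by norm_num) (integrable_ell hw)
      ((integrable_ell (by norm_num)).const_mul _)
    intro t ht
    rcases eq_or_lt_of_le ht.2 with h | h
    · rw [h]; norm_num
    · have ht2 : 0 < 1 - t ^ 2 := by nlinarith [ht.1]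
      have hw1 : 0 < 1 - w := by linarith [hw.2]
      have hB : 0 < (1 - t ^ 2) * (1 - w) := by positivity
      calc 1 / Real.sqrt ((1 - t ^ 2) * (1 - w * t ^ 2))
          ≤ 1 / Real.sqrt ((1 - t ^ 2) * (1 - w)) := by
            apply one_div_le_one_div_of_le (Real.sqrt_pos.2 hB)
            apply Real.sqrt_le_sqrt
            nlinarith [mul_nonneg hw.1 (sq_nonneg (1 - t ^ 2))]
        _ = 1 / Real.sqrt (1 - w) * (1 / Real.sqrt ((1 - t ^ 2) * (1 - 0 * t ^ 2))) := by
            rw [Real.sqrt_mul ht2.le]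
            rw [show (1:ℝ) - 0 * t ^ 2 = 1 by ring]
            rw [Real.sqrt_mul ht2.le, Real.sqrt_one]
            field_simp
  rw [ellipticK_zero] at h0
  exact h0

lemma ellipticK_tendsto_zero :
    Tendsto ellipticK (𝓝[Set.Ioo (0:ℝ) 1] 0) (𝓝 (Real.pi / 2)) := by
  apply tendsto_of_tendsto_of_tendsto_of_le_of_le'
    (tendsto_const_nhds : Tendsto (fun _ : ℝ => Real.pi / 2) _ _)
    (f := fun w => ellipticK w) (h := fun w => (1 / Real.sqrt (1 - w)) * (Real.pi / 2))
  · have : Tendsto (fun w : ℝ => (1 / Real.sqrt (1 - w)) * (Real.pi / 2)) (𝓝 0)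
        (𝓝 ((1 / Real.sqrt (1 - 0)) * (Real.pi / 2))) := by
      apply ContinuousAt.tendsto
      have h1 : ContinuousAt (fun w : ℝ => Real.sqrt (1 - w)) 0 :=
        (Real.continuous_sqrt.comp (by continuity)).continuousAt
      exact ((continuousAt_const.div h1 (by norm_num)).mul continuousAt_const)
    simp only [sub_zero, Real.sqrt_one, one_div, inv_one, one_mul] at this
    simpa using this.mono_left nhdsWithin_le_nhds
  · filter_upwards [self_mem_nhdsWithin] with w hw
    exact ellipticK_lb ⟨hw.1.le, hw.2⟩
  · filter_upwards [self_mem_nhdsWithin] with w hw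
    exact ellipticK_ub ⟨hw.1.le, hw.2⟩

lemma K_ge {k : ℝ} (hk : k ∈ Set.Ioo (0:ℝ) 1) :
    (1/2) * (∫ t in (0:ℝ)..1, 1 / Real.sqrt ((1 - t) * (1 - k * t))) ≤ ellipticK (k^2) := by
  obtain ⟨hk0, hk1⟩ := hk
  rw [ellipticK, ← intervalIntegral.integral_const_mul]
  apply intervalIntegral.integral_mono_on (by norm_num)
    ((integrable_p ⟨hk0, hk1⟩).const_mul _)
    (integrable_ell ⟨by positivity, by nlinarith⟩)
  intro t ht
  rcases eq_or_lt_of_le ht.2 with h | h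
  · rw [h]; norm_num
  · have ht0 := ht.1
    have ha0 : 0 < 1 - t := by linarith
    have hc0 : 0 < 1 - k * t := by nlinarith
    have hfac : (1 - t ^ 2) * (1 - k ^ 2 * t ^ 2)
        = ((1 - t) * (1 - k * t)) * ((1 + t) * (1 + k * t)) := by ring
    have hA : 0 < (1 - t ^ 2) * (1 - k ^ 2 * t ^ 2) := by
      rw [hfac]
      have h1 : (0:ℝ) < 1 + t := by linarith
      have h2 : (0:ℝ) < 1 + k * t := by nlinarith
      exact mul_pos (mul_pos ha0 hc0) (mul_pos h1 h2)
    have hle : (1 - t ^ 2) * (1 - k ^ 2 * t ^ 2) ≤ 4 * ((1 - t) * (1 - k * t)) := by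
      rw [hfac]
      have h4 : (1 + t) * (1 + k * t) ≤ 4 := by nlinarith
      nlinarith [mul_pos ha0 hc0]
    have h4eq : Real.sqrt (4 * ((1 - t) * (1 - k * t)))
        = 2 * Real.sqrt ((1 - t) * (1 - k * t)) := by
      rw [Real.sqrt_mul (by norm_num : (0:ℝ) ≤ 4),
        show Real.sqrt 4 = 2 by
          rw [show (4:ℝ) = 2^2 by norm_num, Real.sqrt_sq (by norm_num : (0:ℝ) ≤ 2)]]
    have hs : Real.sqrt ((1 - t ^ 2) * (1 - k ^ 2 * t ^ 2))
        ≤ 2 * Real.sqrt ((1 - t) * (1 - k * t)) := by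
      rw [← h4eq]; exact Real.sqrt_le_sqrt hle
    have hr0 : 0 < Real.sqrt ((1 - t) * (1 - k * t)) := Real.sqrt_pos.2 (mul_pos ha0 hc0)
    rw [show (1:ℝ)/2 * (1 / Real.sqrt ((1 - t) * (1 - k * t)))
      = 1 / (2 * Real.sqrt ((1 - t) * (1 - k * t))) by field_simp]
    apply one_div_le_one_div_of_le (Real.sqrt_pos.2 hA)
    exact hs

set_option maxHeartbeats 1000000 in
lemma pointwise_ub {k t : ℝ} (hk : k ∈ Set.Ioo (0:ℝ) 1) (ht : t ∈ Set.Icc (0:ℝ) 1) :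
    1 / Real.sqrt ((1 - t ^ 2) * (1 - k ^ 2 * t ^ 2)) ≤
      1/2 * (1 / Real.sqrt ((1 - t) * (1 - k * t)))
        + 1/3 * (2 + Real.sqrt (1 - k) * (1 / Real.sqrt (1 - t))) := by
  obtain ⟨hk0, hk1⟩ := hk
  obtain ⟨ht0, ht1'⟩ := ht
  rcases eq_or_lt_of_le ht1' with h | ht1
  · rw [h]
    norm_num
  · have ha0 : 0 < 1 - t := by linarith
    have hc0 : 0 < 1 - k * t := by nlinarith
    have hq0' : (1:ℝ) ≤ (1 + t) * (1 + k * t) := by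
      nlinarith [mul_nonneg hk0.le ht0, mul_nonneg (mul_nonneg hk0.le ht0) ht0]
    set a := Real.sqrt (1 - t) with hadef
    set c := Real.sqrt (1 - k * t) with hcdef
    set q := Real.sqrt ((1 + t) * (1 + k * t)) with hqdef
    set d := Real.sqrt (1 - k) with hddef
    have hap : 0 < a := Real.sqrt_pos.2 ha0
    have hcp : 0 < c := Real.sqrt_pos.2 hc0
    have hdp : 0 < d := Real.sqrt_pos.2 (by linarith)
    have ha2 : a ^ 2 = 1 - t := Real.sq_sqrt ha0.le
    have hc2 : c ^ 2 = 1 - k * t := Real.sq_sqrt hc0.le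
    have hq2' : q ^ 2 = (1 + t) * (1 + k * t) := Real.sq_sqrt (by nlinarith)
    have hd2 : d ^ 2 = 1 - k := Real.sq_sqrt (by linarith)
    have hq1 : 1 ≤ q := by
      rw [show (1:ℝ) = Real.sqrt 1 by simp [Real.sqrt_one]]
      exact Real.sqrt_le_sqrt hq0'
    have hq2 : q ≤ 2 := by
      rw [show (2:ℝ) = Real.sqrt 4 by
        rw [show (4:ℝ) = 2^2 by norm_num, Real.sqrt_sq (by norm_num : (0:ℝ) ≤ 2)]]
      exact Real.sqrt_le_sqrt (by nlinarith)
    have hqp : 0 < q := lt_of_lt_of_le one_pos hq1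
    have hac : a ≤ c := by
      rw [hadef, hcdef]; exact Real.sqrt_le_sqrt (by nlinarith)
    have hcad : c ≤ a + d := by
      have h1 : c ^ 2 ≤ (a + d) ^ 2 := by
        rw [hc2]; nlinarith [mul_nonneg hap.le hdp.le]
      nlinarith [hap, hdp]
    -- rewrite the big sqrt
    have e1 : Real.sqrt ((1 - t ^ 2) * (1 - k ^ 2 * t ^ 2)) = a * c * q := by
      rw [show (1 - t ^ 2) * (1 - k ^ 2 * t ^ 2)
        = ((1 - t) * (1 - k * t)) * ((1 + t) * (1 + k * t)) by ring]
      rw [Real.sqrt_mul (mul_pos ha0 hc0).le, Real.sqrt_mul ha0.le]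
    have e2 : Real.sqrt ((1 - t) * (1 - k * t)) = a * c := Real.sqrt_mul ha0.le _
    rw [e1, e2]
    clear_value a c q d
    -- main chain
    have step2 : 1/q ≤ 1/2 + (4 - q^2)/6 := by
      rw [div_le_iff₀ hqp]
      nlinarith [mul_nonneg (mul_nonneg (sub_nonneg.2 hq1) (sub_nonneg.2 hq2))
        (by linarith : (0:ℝ) ≤ q + 3)]
    have step3 : 4 - q^2 ≤ 2*(a^2 + c^2) := by
      rw [hq2', ha2, hc2]
      nlinarith [mul_nonneg ha0.le hc0.le]
    have step4 : 1/(a*c) * ((4 - q^2)/6) ≤ 1/3 * (2 + d * (1/a)) := by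
      have eq1 : 1/(a*c) * ((4 - q^2)/6) = (4 - q^2) / (6*(a*c)) := by
        rw [div_mul_div_comm, one_mul, mul_comm (a*c) 6]
      have eq2 : 1/3 * (2 + d * (1/a)) = (2*a + d) / (3*a) := by
        rw [mul_one_div, show (2:ℝ) + d/a = (2*a + d)/a from by
          rw [add_div, mul_div_assoc, div_self hap.ne', mul_one],
          div_mul_div_comm, one_mul]
      rw [eq1, eq2, div_le_div_iff₀ (by positivity) (by positivity)]
      have k1 : a * a ≤ a * c := by nlinarith
      have k2 : c * c ≤ c * (a + d) := by nlinarith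
      nlinarith [step3, mul_pos hap hcp, mul_pos hap hdp, mul_pos hcp hdp,
        mul_le_mul_of_nonneg_left step3 (mul_pos hap hcp).le]
    calc 1 / (a * c * q) = 1/(a*c) * (1/q) := by
          rw [one_div_mul_one_div]
      _ ≤ 1/(a*c) * (1/2 + (4 - q^2)/6) := by
          apply mul_le_mul_of_nonneg_left step2 (by positivity)
      _ = 1/2 * (1/(a*c)) + 1/(a*c) * ((4 - q^2)/6) := by ring
      _ ≤ 1/2 * (1/(a*c)) + 1/3 * (2 + d * (1/a)) := by linarith [step4]

lemma K_le {k : ℝ} (hk : k ∈ Set.Ioo (0:ℝ) 1) :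
    ellipticK (k^2) ≤ 1/2 * (∫ t in (0:ℝ)..1, 1 / Real.sqrt ((1 - t) * (1 - k * t)))
      + (2/3 + (∫ t in (0:ℝ)..1, 1 / Real.sqrt (1 - t))/3) := by
  obtain ⟨hk0, hk1⟩ := hk
  set M := ∫ t in (0:ℝ)..1, 1 / Real.sqrt (1 - t) with hM
  have hM0 : 0 ≤ M := intervalIntegral.integral_nonneg (by norm_num)
    (fun t _ => by positivity)
  have hd1 : Real.sqrt (1 - k) ≤ 1 := by
    have h := Real.sqrt_le_sqrt (show 1 - k ≤ 1 by linarith)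
    rwa [Real.sqrt_one] at h
  have hint2' : IntervalIntegrable (fun t : ℝ => 2 + Real.sqrt (1 - k) * (1 / Real.sqrt (1 - t)))
      volume 0 1 :=
    (intervalIntegrable_const (c := (2:ℝ))).add (invsqrt_integrable.const_mul _)
  have hint1 := (integrable_p ⟨hk0, hk1⟩).const_mul (1/2 : ℝ)
  have hint2 := hint2'.const_mul (1/3 : ℝ)
  have step : ellipticK (k^2) ≤ ∫ t in (0:ℝ)..1,
      (1/2 * (1 / Real.sqrt ((1 - t) * (1 - k * t)))
        + 1/3 * (2 + Real.sqrt (1 - k) * (1 / Real.sqrt (1 - t)))) := by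
    rw [ellipticK]
    apply intervalIntegral.integral_mono_on (by norm_num)
      (integrable_ell ⟨by positivity, by nlinarith⟩) (hint1.add hint2)
    exact fun t ht => pointwise_ub ⟨hk0, hk1⟩ ht
  rw [intervalIntegral.integral_add hint1 hint2,
    intervalIntegral.integral_const_mul, intervalIntegral.integral_const_mul,
    intervalIntegral.integral_add (intervalIntegrable_const (c := (2:ℝ)))
      (invsqrt_integrable.const_mul _),
    intervalIntegral.integral_const, intervalIntegral.integral_const_mul] at step
  simp only [smul_eq_mul, sub_zero, one_mul] at step
  have : Real.sqrt (1 - k) * M ≤ M := by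
    nlinarith
  linarith

lemma L_atBot : Tendsto (fun k : ℝ => Real.log (1 - k)) (𝓝[Set.Ioo (0:ℝ) 1] 1) atBot := by
  apply Real.tendsto_log_nhdsGT_zero.comp
  apply tendsto_nhdsWithin_of_tendsto_nhds_of_eventually_within
  · have : Tendsto (fun k : ℝ => 1 - k) (𝓝 1) (𝓝 (1 - 1)) :=
      (continuous_const.sub continuous_id).tendsto 1
    simpa using this.mono_left nhdsWithin_le_nhds
  · filter_upwards [self_mem_nhdsWithin] with k hk
    exact sub_pos.2 hk.2

lemma negL_atTop : Tendsto (fun k : ℝ => -Real.log (1 - k)) (𝓝[Set.Ioo (0:ℝ) 1] 1) atTop :=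
  tendsto_neg_atBot_atTop.comp L_atBot

lemma sqrtk_tendsto : Tendsto (fun k : ℝ => Real.sqrt k) (𝓝[Set.Ioo (0:ℝ) 1] 1) (𝓝 1) := by
  have : Tendsto (fun k : ℝ => Real.sqrt k) (𝓝 1) (𝓝 (Real.sqrt 1)) :=
    Real.continuous_sqrt.tendsto 1
  rw [Real.sqrt_one] at this
  exact this.mono_left nhdsWithin_le_nhds

lemma ratio_P : Tendsto
    (fun k : ℝ => (∫ t in (0:ℝ)..1, 1 / Real.sqrt ((1 - t) * (1 - k * t)))
      / (-Real.log (1 - k)))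
    (𝓝[Set.Ioo (0:ℝ) 1] 1) (𝓝 1) := by
  have hev : ∀ᶠ k in 𝓝[Set.Ioo (0:ℝ) 1] 1,
      (2 / Real.sqrt k * Real.log (1 + Real.sqrt k)) * (-Real.log (1 - k))⁻¹
        + 1 / Real.sqrt k
      = (∫ t in (0:ℝ)..1, 1 / Real.sqrt ((1 - t) * (1 - k * t)))
          / (-Real.log (1 - k)) := by
    filter_upwards [self_mem_nhdsWithin] with k hk
    rw [P_val hk]
    have hL : Real.log (1 - k) < 0 := Real.log_neg (by linarith [hk.2]) (by linarith [hk.1])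
    have key : ∀ X Y L : ℝ, L ≠ 0 → X * (-L)⁻¹ + Y = (X - Y * L) / (-L) := by
      intro X Y L h
      rw [← div_eq_mul_inv, div_add' _ _ _ (neg_ne_zero.2 h)]
      congr 1
      ring
    exact key _ _ _ hL.ne
  apply Tendsto.congr' hev
  have h1 : Tendsto (fun k : ℝ => 2 / Real.sqrt k * Real.log (1 + Real.sqrt k))
      (𝓝[Set.Ioo (0:ℝ) 1] 1) (𝓝 (2 * Real.log 2)) := by
    have h2 : Tendsto (fun k : ℝ => 2 / Real.sqrt k) (𝓝[Set.Ioo (0:ℝ) 1] 1) (𝓝 2) := by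
      have := (tendsto_const_nhds : Tendsto (fun _ : ℝ => (2:ℝ)) (𝓝[Set.Ioo (0:ℝ) 1] 1)
        (𝓝 2)).div sqrtk_tendsto (by norm_num : (1:ℝ) ≠ 0)
      rw [div_one] at this
      exact this
    have h3 : Tendsto (fun k : ℝ => Real.log (1 + Real.sqrt k)) (𝓝[Set.Ioo (0:ℝ) 1] 1)
        (𝓝 (Real.log 2)) := by
      have h4 : Tendsto (fun k : ℝ => 1 + Real.sqrt k) (𝓝[Set.Ioo (0:ℝ) 1] 1) (𝓝 2) := by
        have := (tendsto_const_nhds : Tendsto (fun _ : ℝ => (1:ℝ)) (𝓝[Set.Ioo (0:ℝ) 1] 1)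
          (𝓝 1)).add sqrtk_tendsto
        rw [show (1:ℝ) + 1 = 2 by norm_num] at this
        exact this
      exact ((Real.continuousAt_log (by norm_num)).tendsto).comp h4
    exact h2.mul h3
  have h5 : Tendsto (fun k : ℝ => (-Real.log (1 - k))⁻¹) (𝓝[Set.Ioo (0:ℝ) 1] 1) (𝓝 0) :=
    negL_atTop.inv_tendsto_atTop
  have h6 : Tendsto (fun k : ℝ => 1 / Real.sqrt k) (𝓝[Set.Ioo (0:ℝ) 1] 1) (𝓝 1) := by
    have := (tendsto_const_nhds : Tendsto (fun _ : ℝ => (1:ℝ)) (𝓝[Set.Ioo (0:ℝ) 1] 1)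
      (𝓝 1)).div sqrtk_tendsto (by norm_num : (1:ℝ) ≠ 0)
    rw [div_one] at this
    exact this
  have h7 := (h1.mul h5).add h6
  rw [mul_zero, zero_add] at h7
  exact h7

lemma ratio_K : Tendsto (fun k : ℝ => ellipticK (k^2) / (-Real.log (1 - k)))
    (𝓝[Set.Ioo (0:ℝ) 1] 1) (𝓝 (1/2)) := by
  set C : ℝ := 2/3 + (∫ t in (0:ℝ)..1, 1 / Real.sqrt (1 - t))/3 with hC
  have hlow : Tendsto (fun k : ℝ =>
      1/2 * ((∫ t in (0:ℝ)..1, 1 / Real.sqrt ((1 - t) * (1 - k * t))) / (-Real.log (1 - k))))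
      (𝓝[Set.Ioo (0:ℝ) 1] 1) (𝓝 (1/2)) := by
    have := ratio_P.const_mul (1/2 : ℝ)
    rw [mul_one] at this
    exact this
  have hupp : Tendsto (fun k : ℝ =>
      1/2 * ((∫ t in (0:ℝ)..1, 1 / Real.sqrt ((1 - t) * (1 - k * t))) / (-Real.log (1 - k)))
        + C * (-Real.log (1 - k))⁻¹)
      (𝓝[Set.Ioo (0:ℝ) 1] 1) (𝓝 (1/2)) := by
    have h2 := (tendsto_const_nhds : Tendsto (fun _ : ℝ => C) (𝓝[Set.Ioo (0:ℝ) 1] 1)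
      (𝓝 C)).mul negL_atTop.inv_tendsto_atTop
    have := hlow.add h2
    rw [mul_zero, add_zero] at this
    exact this
  apply tendsto_of_tendsto_of_tendsto_of_le_of_le' hlow hupp
  · filter_upwards [self_mem_nhdsWithin] with k hk
    have hLpos : 0 < -Real.log (1 - k) := by
      have : Real.log (1 - k) < 0 := Real.log_neg (by linarith [hk.2]) (by linarith [hk.1])
      linarith
    have h1 := K_ge hk
    rw [mul_div_assoc'] at *
    gcongr
  · filter_upwards [self_mem_nhdsWithin] with k hk
    have hLpos : 0 < -Real.log (1 - k) := by
      have : Real.log (1 - k) < 0 := Real.log_neg (by linarith [hk.2]) (by linarith [hk.1])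
      linarith
    calc ellipticK (k^2) / (-Real.log (1 - k))
        ≤ (1/2 * (∫ t in (0:ℝ)..1, 1 / Real.sqrt ((1 - t) * (1 - k * t))) + C)
            / (-Real.log (1 - k)) := by
          gcongr
          exact K_le hk
      _ = 1/2 * ((∫ t in (0:ℝ)..1, 1 / Real.sqrt ((1 - t) * (1 - k * t)))
            / (-Real.log (1 - k))) + C * (-Real.log (1 - k))⁻¹ := by
          rw [add_div, mul_div_assoc, div_eq_mul_inv C]

lemma ratio_negL_K : Tendsto (fun k : ℝ => (-Real.log (1 - k)) / ellipticK (k^2))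
    (𝓝[Set.Ioo (0:ℝ) 1] 1) (𝓝 2) := by
  have h := ratio_K.inv₀ (by norm_num : (1/2:ℝ) ≠ 0)
  rw [show ((1:ℝ)/2)⁻¹ = 2 by norm_num] at h
  apply h.congr
  intro k
  rw [inv_div]

lemma K2_tendsto : Tendsto (fun k : ℝ => ellipticK (1 - k^2)) (𝓝[Set.Ioo (0:ℝ) 1] 1)
    (𝓝 (Real.pi/2)) := by
  apply ellipticK_tendsto_zero.comp
  apply tendsto_nhdsWithin_of_tendsto_nhds_of_eventually_within
  · have : Tendsto (fun k : ℝ => 1 - k^2) (𝓝 1) (𝓝 (1 - 1^2)) :=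
      (continuous_const.sub (continuous_pow 2)).tendsto 1
    norm_num at this
    exact this.mono_left nhdsWithin_le_nhds
  · filter_upwards [self_mem_nhdsWithin] with k hk
    constructor
    · nlinarith [hk.1, hk.2]
    · nlinarith [hk.1]

lemma T1 : Tendsto (fun k : ℝ => Real.log ((1 - k) ^ 2 / (1 + k) ^ 2) / (-Real.log (1 - k)))
    (𝓝[Set.Ioo (0:ℝ) 1] 1) (𝓝 (-2)) := by
  have hev : ∀ᶠ k in 𝓝[Set.Ioo (0:ℝ) 1] 1,
      -2 + 2 * Real.log (1 + k) * (Real.log (1 - k))⁻¹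
        = Real.log ((1 - k) ^ 2 / (1 + k) ^ 2) / (-Real.log (1 - k)) := by
    filter_upwards [self_mem_nhdsWithin] with k hk
    have h1 : (0:ℝ) < 1 - k := by linarith [hk.2]
    have h2 : (0:ℝ) < 1 + k := by linarith [hk.1]
    have hLne : Real.log (1 - k) ≠ 0 :=
      (Real.log_neg h1 (by linarith [hk.1])).ne
    rw [Real.log_div (by positivity) (by positivity), Real.log_pow, Real.log_pow]
    push_cast
    have c1 : (2 * Real.log (1 - k)) / Real.log (1 - k) = 2 := by
      rw [mul_div_assoc, div_self hLne, mul_one]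
    rw [div_neg, sub_div, c1, neg_sub, div_eq_mul_inv]
    ring
  apply Tendsto.congr' hev
  have h3 : Tendsto (fun k : ℝ => Real.log (1 + k)) (𝓝[Set.Ioo (0:ℝ) 1] 1) (𝓝 (Real.log 2)) := by
    have h4 : Tendsto (fun k : ℝ => 1 + k) (𝓝 1) (𝓝 2) := by
      have : Tendsto (fun k : ℝ => 1 + k) (𝓝 1) (𝓝 (1 + 1)) :=
        ((continuous_const.add continuous_id).tendsto (1:ℝ))
      rw [show (1:ℝ) + 1 = 2 by norm_num] at this
      exact this
    exact ((Real.continuousAt_log (by norm_num)).tendsto).comp (h4.mono_left nhdsWithin_le_nhds)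
  have h5 : Tendsto (fun k : ℝ => (Real.log (1 - k))⁻¹) (𝓝[Set.Ioo (0:ℝ) 1] 1) (𝓝 0) := by
    have h5' := negL_atTop.inv_tendsto_atTop.neg
    rw [neg_zero] at h5'
    apply h5'.congr
    intro k
    simp only [Pi.neg_apply, Pi.inv_apply]
    rw [inv_neg, neg_neg]
  have h6 := (tendsto_const_nhds : Tendsto (fun _ : ℝ => (-2:ℝ)) (𝓝[Set.Ioo (0:ℝ) 1] 1)
    (𝓝 (-2))).add (((tendsto_const_nhds : Tendsto (fun _ : ℝ => (2:ℝ)) (𝓝[Set.Ioo (0:ℝ) 1] 1)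
    (𝓝 2)).mul h3).mul h5)
  rw [mul_zero, add_zero] at h6
  exact h6

/-- As `k ↑ 1` (with `k ∈ (0,1)`),
`log((1−k)²/(1+k)²) / (2K(k²)/K(1−k²)) → −π`. -/
theorem ellipticK_aspect_ratio_limit :
    Tendsto (fun k : ℝ =>
        Real.log ((1 - k) ^ 2 / (1 + k) ^ 2) /
          (2 * ellipticK (k ^ 2) / ellipticK (1 - k ^ 2)))
      (𝓝[Set.Ioo (0 : ℝ) 1] 1) (𝓝 (-Real.pi)) := by
  have hev : ∀ᶠ k in 𝓝[Set.Ioo (0:ℝ) 1] 1,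
      (Real.log ((1 - k) ^ 2 / (1 + k) ^ 2) / (-Real.log (1 - k)))
        * ((-Real.log (1 - k)) / ellipticK (k^2)) * (ellipticK (1 - k^2) / 2)
      = Real.log ((1 - k) ^ 2 / (1 + k) ^ 2) /
          (2 * ellipticK (k ^ 2) / ellipticK (1 - k ^ 2)) := by
    filter_upwards [self_mem_nhdsWithin] with k hk
    have h1 : (0:ℝ) < 1 - k := by linarith [hk.2]
    have hLne : Real.log (1 - k) ≠ 0 :=
      (Real.log_neg h1 (by linarith [hk.1])).ne
    have hK1 : 0 < ellipticK (k^2) := by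
      have := ellipticK_lb (w := k^2) ⟨by positivity, by nlinarith [hk.1, hk.2]⟩
      nlinarith [Real.pi_pos]
    rw [div_div_eq_mul_div]
    field_simp
    try ring
    try exact Or.inl trivial
  apply Tendsto.congr' hev
  have := (T1.mul ratio_negL_K).mul (K2_tendsto.div_const 2)
  rw [show (-2:ℝ) * 2 * (Real.pi / 2 / 2) = -Real.pi by ring] at this
  exact this
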